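/- Let K and M be closed subspaces of a complex Hilbert space E. Then the powers (P_K ∘ P_M)ⁿ converge in the weak operator topology to the orthogonal projection onto K ⊓ M: for all φ, ψ ∈ E, the inner products ⟪φ, (P_K ∘ P_M)ⁿ ψ⟫ converge to ⟪φ, P_{K ⊓ M} ψ⟫ as n → ∞. -/

import Mathlib

/-!
With `A = P_K P_M`, the operator `S = A† A = P_M P_K P_M` is a positive contraction and
`A ^ (n + 1) = A Sⁿ`. The moments `aₙ = re ⟪x, Sⁿ x⟫` decrease (the even ones are `‖Sᵏ x‖²`, the
odd ones `‖A Sᵏ x‖²`, and `A`, `A†` are contractions), so they converge, and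
`‖Sᵐ x - Sⁿ x‖² = a₂ₘ + a₂ₙ - 2 aₘ₊ₙ` shows that `Sⁿ x` is Cauchy. Its limit `L` is fixed by `S`,
which for a product of projections forces `L ∈ K ⊓ M`; and `P_{K ⊓ M} S = P_{K ⊓ M}` identifies
`L = P_{K ⊓ M} x`. Hence `Aⁿ x → P_{K ⊓ M} x` in norm, a fortiori weakly.
-/

variable {E : Type*} [NormedAddCommGroup E] [InnerProductSpace ℂ E] [CompleteSpace E]

/-- Orthogonal projection onto (the topological closure of) a submodule, as a
continuous linear operator on `E`. For a closed subspace `K` this is the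
orthogonal projection `P_K` onto `K` itself. -/
noncomputable def proj (K : Submodule ℂ E) : E →L[ℂ] E :=
  K.topologicalClosure.subtypeL.comp (K.topologicalClosure.orthogonalProjectionOnto)

open Filter Topology RCLike
open scoped InnerProductSpace InnerProduct

section SelfAdjointPowers

variable {𝕜 F : Type*} [RCLike 𝕜] [NormedAddCommGroup F] [InnerProductSpace 𝕜 F] [CompleteSpace F]

open ContinuousLinearMap

namespace IsSelfAdjoint

variable {T : F →L[𝕜] F}

theorem inner_pow_apply_pow_apply (hT : IsSelfAdjoint T) (m n : ℕ) (x : F) :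
    ⟪(T ^ m) x, (T ^ n) x⟫_𝕜 = ⟪x, (T ^ (m + n)) x⟫_𝕜 := by
  rw [← (hT.pow m).adjoint_eq, adjoint_inner_left, pow_add, mul_apply_eq_comp]

theorem re_inner_pow_two_mul_apply (hT : IsSelfAdjoint T) (n : ℕ) (x : F) :
    re ⟪x, (T ^ (2 * n)) x⟫_𝕜 = ‖(T ^ n) x‖ ^ 2 := by
  rw [two_mul, ← hT.inner_pow_apply_pow_apply, inner_self_eq_norm_sq]

theorem norm_pow_apply_sub_pow_apply_sq (hT : IsSelfAdjoint T) (m n : ℕ) (x : F) :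
    ‖(T ^ m) x - (T ^ n) x‖ ^ 2 =
      re ⟪x, (T ^ (2 * m)) x⟫_𝕜 + re ⟪x, (T ^ (2 * n)) x⟫_𝕜 - 2 * re ⟪x, (T ^ (m + n)) x⟫_𝕜 := by
  rw [norm_sub_sq (𝕜 := 𝕜), hT.inner_pow_apply_pow_apply, hT.re_inner_pow_two_mul_apply,
    hT.re_inner_pow_two_mul_apply]
  ring

theorem cauchySeq_pow_apply (hT : IsSelfAdjoint T) {x : F}
    (ha : Antitone fun n => re ⟪x, (T ^ n) x⟫_𝕜) : CauchySeq fun n => (T ^ n) x := by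
  set a : ℕ → ℝ := fun n => re ⟪x, (T ^ n) x⟫_𝕜
  have ha_nonneg (n : ℕ) : 0 ≤ a n :=
    calc 0 ≤ ‖(T ^ n) x‖ ^ 2 := sq_nonneg _
      _ = a (2 * n) := (hT.re_inner_pow_two_mul_apply n x).symm
      _ ≤ a n := ha (by omega)
  obtain ⟨c, hc⟩ : ∃ c, Tendsto a atTop (𝓝 c) :=
    ⟨_, tendsto_atTop_ciInf ha ⟨0, Set.forall_mem_range.2 ha_nonneg⟩⟩
  have hlim {f : ℕ × ℕ → ℕ} (hf : ∀ p, min p.1 p.2 ≤ f p) : Tendsto (a ∘ f) atTop (𝓝 c) :=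
    hc.comp <| tendsto_atTop_atTop.2 fun b => ⟨(b, b), fun p hp => (le_min hp.1 hp.2).trans (hf p)⟩
  have hsq : Tendsto (fun p : ℕ × ℕ => dist ((T ^ p.1) x) ((T ^ p.2) x) ^ 2) atTop (𝓝 0) := by
    have := ((hlim (f := fun p => 2 * p.1) fun p => by omega).add
      (hlim (f := fun p => 2 * p.2) fun p => by omega)).sub
      ((hlim (f := fun p => p.1 + p.2) fun p => by omega).const_mul 2)
    simp only [dist_eq_norm, hT.norm_pow_apply_sub_pow_apply_sq]
    convert this using 2
    · simp only [Function.comp_apply, a]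
    · ring
  rw [cauchySeq_iff_tendsto_dist_atTop_0]
  simpa [Real.sqrt_sq dist_nonneg] using hsq.sqrt

end IsSelfAdjoint

namespace ContinuousLinearMap

theorem isSelfAdjoint_adjoint_mul_self (A : F →L[𝕜] F) : IsSelfAdjoint (A† * A) := by
  simpa only [star_eq_adjoint] using IsSelfAdjoint.star_mul_self A

theorem re_inner_pow_two_mul_add_one_apply_adjoint_mul_self (A : F →L[𝕜] F) (n : ℕ) (x : F) :
    re ⟪x, ((A† * A) ^ (2 * n + 1)) x⟫_𝕜 = ‖A (((A† * A) ^ n) x)‖ ^ 2 := by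
  rw [show 2 * n + 1 = n + (n + 1) by ring,
    ← (isSelfAdjoint_adjoint_mul_self A).inner_pow_apply_pow_apply, pow_succ', mul_apply_eq_comp,
    mul_apply_eq_comp, adjoint_inner_right, inner_self_eq_norm_sq]

theorem antitone_re_inner_pow_adjoint_mul_self_apply {A : F →L[𝕜] F} (hA : ‖A‖ ≤ 1) (x : F) :
    Antitone fun n => re ⟪x, ((A† * A) ^ n) x⟫_𝕜 := by
  have hS := isSelfAdjoint_adjoint_mul_self A
  have hcontr {B : F →L[𝕜] F} (hB : ‖B‖ ≤ 1) (y : F) : ‖B y‖ ^ 2 ≤ ‖y‖ ^ 2 := by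
    gcongr
    simpa using B.le_of_opNorm_le hB y
  refine antitone_nat_of_succ_le fun n => ?_
  obtain ⟨k, rfl | rfl⟩ := n.even_or_odd'
  · rw [re_inner_pow_two_mul_add_one_apply_adjoint_mul_self, hS.re_inner_pow_two_mul_apply]
    exact hcontr hA _
  · rw [show 2 * k + 1 + 1 = 2 * (k + 1) by ring, hS.re_inner_pow_two_mul_apply,
      re_inner_pow_two_mul_add_one_apply_adjoint_mul_self, pow_succ' (A† * A), mul_apply_eq_comp,
      mul_apply_eq_comp]
    exact hcontr (by rwa [adjoint.norm_map]) _

theorem exists_tendsto_pow_adjoint_mul_self_apply {A : F →L[𝕜] F} (hA : ‖A‖ ≤ 1) (x : F) :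
    ∃ L, Tendsto (fun n => ((A† * A) ^ n) x) atTop (𝓝 L) :=
  cauchySeq_tendsto_of_complete <| (isSelfAdjoint_adjoint_mul_self A).cauchySeq_pow_apply <|
    antitone_re_inner_pow_adjoint_mul_self_apply hA x

end ContinuousLinearMap

end SelfAdjointPowers

section AlternatingProjections

variable {𝕜 F : Type*} [RCLike 𝕜] [NormedAddCommGroup F] [InnerProductSpace 𝕜 F]

open ContinuousLinearMap

namespace Submodule

variable {K M : Submodule 𝕜 F} [K.HasOrthogonalProjection] [M.HasOrthogonalProjection]

theorem mem_inf_of_starProjection_starProjection_starProjection_eq {x : F}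
    (h : M.starProjection (K.starProjection (M.starProjection x)) = x) : x ∈ K ⊓ M := by
  have hle : ‖x‖ ≤ ‖K.starProjection (M.starProjection x)‖ := by
    conv_lhs => rw [← h]
    exact M.norm_starProjection_apply_le _
  have hxM : x ∈ M := (M.mem_iff_norm_starProjection x).2 <|
    le_antisymm (M.norm_starProjection_apply_le x) (hle.trans (K.norm_starProjection_apply_le _))
  rw [M.starProjection_eq_self_iff.2 hxM] at hle
  exact ⟨(K.mem_iff_norm_starProjection x).2 <| le_antisymm (K.norm_starProjection_apply_le x) hle,
    hxM⟩

variable [CompleteSpace F] (K M)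

theorem adjoint_mul_self_starProjection_mul_starProjection :
    (K.starProjection * M.starProjection)† * (K.starProjection * M.starProjection) =
      M.starProjection * K.starProjection * M.starProjection := by
  have hK : K.starProjection * (K.starProjection * M.starProjection) =
      K.starProjection * M.starProjection := by
    rw [← mul_assoc, K.isIdempotentElem_starProjection.eq]
  rw [← star_eq_adjoint, star_mul, (isSelfAdjoint_starProjection K).star_eq,
    (isSelfAdjoint_starProjection M).star_eq, mul_assoc, hK, mul_assoc]

theorem semiconjBy_starProjection_mul_starProjection :
    SemiconjBy (K.starProjection * M.starProjection)
      ((K.starProjection * M.starProjection)† * (K.starProjection * M.starProjection))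
      (K.starProjection * M.starProjection) := by
  have hM (X : F →L[𝕜] F) : M.starProjection * (M.starProjection * X) = M.starProjection * X := by
    rw [← mul_assoc, M.isIdempotentElem_starProjection.eq]
  rw [SemiconjBy, adjoint_mul_self_starProjection_mul_starProjection]
  simp only [mul_assoc, hM]

theorem tendsto_pow_adjoint_mul_self_starProjection_mul_starProjection_apply
    [(K ⊓ M).HasOrthogonalProjection] (x : F) :
    Tendsto (fun n => (((K.starProjection * M.starProjection)† *
      (K.starProjection * M.starProjection)) ^ n) x) atTop (𝓝 ((K ⊓ M).starProjection x)) := by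
  set S := (K.starProjection * M.starProjection)† * (K.starProjection * M.starProjection) with hS
  set R := (K ⊓ M).starProjection
  have hA : ‖K.starProjection * M.starProjection‖ ≤ 1 := (norm_mul_le _ _).trans <|
    mul_le_one₀ K.starProjection_norm_le (norm_nonneg _) M.starProjection_norm_le
  obtain ⟨L, hL⟩ : ∃ L, Tendsto (fun n => (S ^ n) x) atTop (𝓝 L) :=
    exists_tendsto_pow_adjoint_mul_self_apply hA x
  have hfix : S L = L :=
    isFixedPt_of_tendsto_iterate (by simpa only [FunLike.coe_pow_eq_iterate] using hL)
      S.continuous.continuousAt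
  have hLmem : L ∈ K ⊓ M := mem_inf_of_starProjection_starProjection_starProjection_eq <| by
    simpa only [S, adjoint_mul_self_starProjection_mul_starProjection, mul_apply_eq_comp] using hfix
  have hRK : R * K.starProjection = R := starProjection_comp_starProjection_of_le inf_le_left
  have hRM : R * M.starProjection = R := starProjection_comp_starProjection_of_le inf_le_right
  have hRS : SemiconjBy R S 1 := by
    rw [SemiconjBy, one_mul, hS, adjoint_mul_self_starProjection_mul_starProjection, ← mul_assoc,
      ← mul_assoc, hRM, hRK, hRM]
  have hRSn (n : ℕ) : R ((S ^ n) x) = R x := by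
    rw [← mul_apply_eq_comp, (hRS.pow_right n).eq, one_pow, one_mul]
  have hRL : R L = L := starProjection_eq_self_iff.2 hLmem
  have hlim := (R.continuous.tendsto L).comp hL
  simp only [Function.comp_def, hRSn, hRL] at hlim
  rwa [tendsto_nhds_unique tendsto_const_nhds hlim]

theorem tendsto_pow_starProjection_mul_starProjection_apply [(K ⊓ M).HasOrthogonalProjection]
    (x : F) :
    Tendsto (fun n => ((K.starProjection * M.starProjection) ^ n) x) atTop
      (𝓝 ((K ⊓ M).starProjection x)) := by
  set A := K.starProjection * M.starProjection
  have hpow (n : ℕ) : (A ^ (n + 1)) x = A (((A† * A) ^ n) x) := by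
    rw [pow_succ, ← (semiconjBy_starProjection_mul_starProjection K M).pow_right n |>.eq]
    rfl
  have hA : A ((K ⊓ M).starProjection x) = (K ⊓ M).starProjection x := by
    have hmem := mem_inf.1 ((K ⊓ M).starProjection_apply_mem x)
    simp only [A, mul_apply_eq_comp, starProjection_eq_self_iff.2 hmem.1,
      starProjection_eq_self_iff.2 hmem.2]
  rw [← tendsto_add_atTop_iff_nat 1]
  simpa only [hpow, hA, Function.comp_def] using (A.continuous.tendsto _).comp
    (tendsto_pow_adjoint_mul_self_starProjection_mul_starProjection_apply K M x)

end Submodule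

end AlternatingProjections

theorem proj_eq_starProjection {K : Submodule ℂ E} (hK : IsClosed (K : Set E))
    [K.HasOrthogonalProjection] : proj K = K.starProjection := by
  change K.topologicalClosure.starProjection = _
  congr 1
  exact hK.submodule_topologicalClosure_eq

theorem stmt17 (K M : Submodule ℂ E)
    (hK : IsClosed (K : Set E)) (hM : IsClosed (M : Set E)) (φ ψ : E) :
    Filter.Tendsto (fun n : ℕ => (inner ℂ φ (((proj K ∘L proj M) ^ n) ψ) : ℂ))
      Filter.atTop (nhds (inner ℂ φ (proj (K ⊓ M) ψ) : ℂ)) := by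
  have := hK.completeSpace_coe
  have := hM.completeSpace_coe
  have : CompleteSpace ↥(K ⊓ M) := (hK.inter hM).completeSpace_coe
  rw [proj_eq_starProjection hK, proj_eq_starProjection hM, proj_eq_starProjection (hK.inter hM)]
  exact tendsto_const_nhds.inner (K.tendsto_pow_starProjection_mul_starProjection_apply M ψ)
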